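/- Let A = a₀·I + a·σ and B = b₀·I + b·σ be qubit observables with {a,b} linearly independent in ℝ³. Then the infimum over all qubit density matrices ρ of Δ_ρA + Δ_ρB equals |a × b| / max(|a|, |b|), where a × b is the cross product in ℝ³, and this infimum is attained by some qubit density matrix. -/

import Mathlib

open Matrix MeasureTheory Filter Set
open scoped RealInnerProductSpace Kronecker ComplexOrder

noncomputable section

/-- ℝ³ with the Euclidean norm and inner product. -/
abbrev E3 : Type := EuclideanSpace ℝ (Fin 3)

/-- The Pauli matrices. -/
def pauli1 : Matrix (Fin 2) (Fin 2) ℂ := !![0, 1; 1, 0]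
def pauli2 : Matrix (Fin 2) (Fin 2) ℂ := !![0, -Complex.I; Complex.I, 0]
def pauli3 : Matrix (Fin 2) (Fin 2) ℂ := !![1, 0; 0, -1]

/-- The qubit observable `a₀·I + a·σ`. -/
def qObs (a0 : ℝ) (a : E3) : Matrix (Fin 2) (Fin 2) ℂ :=
  (a0 : ℂ) • (1 : Matrix (Fin 2) (Fin 2) ℂ)
    + (a 0 : ℂ) • pauli1 + (a 1 : ℂ) • pauli2 + (a 2 : ℂ) • pauli3

/-- A density matrix: positive semidefinite with trace one. -/
def IsDensityMatrix {n : Type*} [Fintype n] (ρ : Matrix n n ℂ) : Prop :=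
  ρ.PosSemidef ∧ ρ.trace = 1

/-- Mean value `⟨M⟩_ρ = Tr(Mρ)` of an observable `M` in the state `ρ`. -/
def mean {n : Type*} [Fintype n] (M ρ : Matrix n n ℂ) : ℝ :=
  (Matrix.trace (M * ρ)).re

/-- Variance `(Δ_ρ M)² = Tr(M²ρ) − (Tr(Mρ))²`. -/
def variance {n : Type*} [Fintype n] (M ρ : Matrix n n ℂ) : ℝ :=
  (Matrix.trace (M * M * ρ)).re - (mean M ρ) ^ 2

/-- Uncertainty `Δ_ρ M` (standard deviation). -/
def uncertainty {n : Type*} [Fintype n] (M ρ : Matrix n n ℂ) : ℝ :=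
  Real.sqrt (variance M ρ)

/-- Gram matrix of a tuple of vectors in ℝ³. -/
def gram {m : ℕ} (v : Fin m → E3) : Matrix (Fin m) (Fin m) ℝ :=
  Matrix.of fun i j => (inner ℝ (v i) (v j) : ℝ)

lemma gram_isHermitian {m : ℕ} (v : Fin m → E3) : (gram v).IsHermitian := by
  ext i j
  simp [_root_.gram, Matrix.conjTranspose_apply, mul_comm, real_inner_comm]

/-- Smallest eigenvalue of the Gram matrix. -/
def lamMin {m : ℕ} (v : Fin m → E3) : ℝ := ⨅ i, (gram_isHermitian v).eigenvalues i

/-- Largest eigenvalue of the Gram matrix. -/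
def lamMax {m : ℕ} (v : Fin m → E3) : ℝ := ⨆ i, (gram_isHermitian v).eigenvalues i

/-- The cross product on ℝ³ (as Euclidean space). -/
def cross3 (a b : E3) : E3 :=
  (WithLp.equiv 2 (Fin 3 → ℝ)).symm
    ![a 1 * b 2 - a 2 * b 1, a 2 * b 0 - a 0 * b 2, a 0 * b 1 - a 1 * b 0]

/-! Write a state in Bloch form `ρ = (I + r·σ)/2`; positivity of `ρ` gives `‖r‖ ≤ 1` (as `1 - ‖r‖² = 4 det ρ`), and
`Δ_ρ(a₀I + a·σ) = √(‖a‖² - ⟪a, r⟫²)`. Splitting `a = (a - ⟪a, r⟫ r) + ⟪a, r⟫ r` gives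
`‖a × b‖ ≤ ‖a - ⟪a, r⟫ r‖ ‖b‖ + |⟪a, r⟫| ‖r × b‖ ≤ Δ_ρA ‖b‖ + ‖a‖ Δ_ρB ≤ max ‖a‖ ‖b‖ (Δ_ρA + Δ_ρB)`.
If `‖b‖ ≤ ‖a‖`, the pure state `r = a / ‖a‖` has `Δ_ρA = 0` and `Δ_ρB = ‖r × b‖ = ‖a × b‖ / ‖a‖`,
so the bound is attained. -/

lemma norm_sq_eq_fin3 (a : E3) : ‖a‖ ^ 2 = a 0 ^ 2 + a 1 ^ 2 + a 2 ^ 2 := by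
  rw [← real_inner_self_eq_norm_sq, PiLp.inner_apply]
  simp [Fin.sum_univ_three, sq]

lemma inner_eq_fin3 (a b : E3) : ⟪a, b⟫ = a 0 * b 0 + a 1 * b 1 + a 2 * b 2 := by
  simp only [PiLp.inner_apply, RCLike.inner_apply, Real.ringHom_apply, Fin.sum_univ_three]
  ring

lemma cross3_anticomm (a b : E3) : cross3 a b = -cross3 b a := by
  ext i; fin_cases i <;> simp [cross3] <;> ring

lemma cross3_add_left (a a' b : E3) : cross3 (a + a') b = cross3 a b + cross3 a' b := by
  ext i; fin_cases i <;> simp [cross3] <;> ring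

lemma cross3_smul_left (c : ℝ) (a b : E3) : cross3 (c • a) b = c • cross3 a b := by
  ext i; fin_cases i <;> simp [cross3] <;> ring

lemma norm_cross3_sq (a b : E3) : ‖cross3 a b‖ ^ 2 = ‖a‖ ^ 2 * ‖b‖ ^ 2 - ⟪a, b⟫ ^ 2 := by
  simp only [norm_sq_eq_fin3, inner_eq_fin3, cross3, WithLp.equiv_symm_apply,
    cons_val_zero, cons_val_one, cons_val]
  ring

lemma norm_cross3_le (a b : E3) : ‖cross3 a b‖ ≤ ‖a‖ * ‖b‖ := by
  refine le_of_sq_le_sq ?_ (by positivity)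
  rw [norm_cross3_sq, mul_pow]
  nlinarith [sq_nonneg ⟪a, b⟫]

lemma norm_cross3_comm (a b : E3) : ‖cross3 a b‖ = ‖cross3 b a‖ := by
  rw [cross3_anticomm, norm_neg]

section
variable {F : Type*} [NormedAddCommGroup F] [InnerProductSpace ℝ F]

lemma norm_sub_inner_smul_le {u : F} (hu : ‖u‖ ≤ 1) (a : F) :
    ‖a - ⟪a, u⟫ • u‖ ≤ √(‖a‖ ^ 2 - ⟪a, u⟫ ^ 2) := by
  refine Real.le_sqrt_of_sq_le ?_
  rw [norm_sub_sq_real, real_inner_smul_right, norm_smul, Real.norm_eq_abs, mul_pow, sq_abs]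
  nlinarith [mul_le_mul_of_nonneg_left (pow_le_one₀ (n := 2) (norm_nonneg u) hu) (sq_nonneg ⟪a, u⟫)]

end

lemma norm_cross3_le_sqrt {u : E3} (hu : ‖u‖ ≤ 1) (b : E3) :
    ‖cross3 u b‖ ≤ √(‖b‖ ^ 2 - ⟪b, u⟫ ^ 2) := by
  refine Real.le_sqrt_of_sq_le ?_
  rw [norm_cross3_sq, real_inner_comm]
  nlinarith [mul_le_mul_of_nonneg_right (pow_le_one₀ (n := 2) (norm_nonneg u) hu) (sq_nonneg ‖b‖)]

theorem norm_cross3_le_max_mul {u : E3} (hu : ‖u‖ ≤ 1) (a b : E3) :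
    ‖cross3 a b‖ ≤ max ‖a‖ ‖b‖ * (√(‖a‖ ^ 2 - ⟪a, u⟫ ^ 2) + √(‖b‖ ^ 2 - ⟪b, u⟫ ^ 2)) := by
  have hg : |⟪a, u⟫| ≤ ‖a‖ :=
    (abs_real_inner_le_norm a u).trans (mul_le_of_le_one_right (norm_nonneg a) hu)
  calc ‖cross3 a b‖ = ‖cross3 (a - ⟪a, u⟫ • u) b + ⟪a, u⟫ • cross3 u b‖ := by
        rw [← cross3_smul_left, ← cross3_add_left, sub_add_cancel]
    _ ≤ ‖a - ⟪a, u⟫ • u‖ * ‖b‖ + |⟪a, u⟫| * ‖cross3 u b‖ := by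
        grw [norm_add_le, norm_cross3_le, norm_smul, Real.norm_eq_abs]
    _ ≤ √(‖a‖ ^ 2 - ⟪a, u⟫ ^ 2) * max ‖a‖ ‖b‖ + max ‖a‖ ‖b‖ * √(‖b‖ ^ 2 - ⟪b, u⟫ ^ 2) := by
        gcongr
        · exact norm_sub_inner_smul_le hu a
        · exact le_max_right _ _
        · exact hg.trans (le_max_left _ _)
        · exact norm_cross3_le_sqrt hu b
    _ = _ := by ring

lemma sqrt_sub_inner_sq_eq_norm_cross3 {u : E3} (hu : ‖u‖ = 1) (b : E3) :
    √(‖b‖ ^ 2 - ⟪b, u⟫ ^ 2) = ‖cross3 u b‖ := by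
  rw [← Real.sqrt_sq (norm_nonneg (cross3 u b)), norm_cross3_sq, hu, real_inner_comm]
  ring_nf

theorem exists_norm_eq_one_sqrt_add_sqrt_eq (a b : E3) :
    ∃ u : E3, ‖u‖ = 1 ∧
      √(‖a‖ ^ 2 - ⟪a, u⟫ ^ 2) + √(‖b‖ ^ 2 - ⟪b, u⟫ ^ 2) = ‖cross3 a b‖ / max ‖a‖ ‖b‖ := by
  wlog hba : ‖b‖ ≤ ‖a‖ generalizing a b
  · obtain ⟨u, hu, heq⟩ := this b a (le_of_not_ge hba)
    exact ⟨u, hu, by rw [add_comm, heq, norm_cross3_comm, max_comm]⟩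
  rcases eq_or_ne a 0 with rfl | ha
  · obtain rfl : b = 0 := norm_le_zero_iff.1 (by simpa using hba)
    exact ⟨EuclideanSpace.single 0 1, by simp, by simp [cross3]⟩
  have hu : ‖‖a‖⁻¹ • a‖ = 1 := norm_smul_inv_norm ha
  refine ⟨‖a‖⁻¹ • a, hu, ?_⟩
  have hau : ⟪a, ‖a‖⁻¹ • a⟫ = ‖a‖ := by
    rw [real_inner_smul_right, real_inner_self_eq_norm_sq]
    field_simp
  rw [hau, sub_self, Real.sqrt_zero, zero_add, sqrt_sub_inner_sq_eq_norm_cross3 hu,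
    cross3_smul_left, norm_smul, max_eq_left hba, norm_inv, norm_norm, inv_mul_eq_div]

def blochVector (ρ : Matrix (Fin 2) (Fin 2) ℂ) : E3 :=
  WithLp.toLp 2 ![(pauli1 * ρ).trace.re, (pauli2 * ρ).trace.re, (pauli3 * ρ).trace.re]

lemma qObs_eq (a0 : ℝ) (a : E3) :
    qObs a0 a = !![(a0 + a 2 : ℂ), a 0 - a 1 * Complex.I; a 0 + a 1 * Complex.I, a0 - a 2] := by
  ext i j
  fin_cases i <;> fin_cases j <;> simp [qObs, pauli1, pauli2, pauli3] <;> ring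

lemma re_trace_qObs_mul (a0 : ℝ) (a : E3) (ρ : Matrix (Fin 2) (Fin 2) ℂ) :
    (qObs a0 a * ρ).trace.re = a0 * ρ.trace.re + ⟪a, blochVector ρ⟫ := by
  simp only [qObs, add_mul, smul_mul_assoc, one_mul, trace_add, trace_smul, smul_eq_mul,
    Complex.add_re, Complex.re_ofReal_mul, inner_eq_fin3, blochVector,
    cons_val_zero, cons_val_one, cons_val]
  ring

lemma qObs_mul_self (a0 : ℝ) (a : E3) :
    qObs a0 a * qObs a0 a = qObs (a0 ^ 2 + ‖a‖ ^ 2) ((2 * a0) • a) := by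
  rw [qObs_eq, qObs_eq, mul_fin_two, norm_sq_eq_fin3]
  ext i j
  fin_cases i <;> fin_cases j <;> simp
  · linear_combination -(a 1 : ℂ) ^ 2 * Complex.I_sq
  · ring
  · ring
  · linear_combination -(a 1 : ℂ) ^ 2 * Complex.I_sq

lemma qObs_isHermitian (a0 : ℝ) (a : E3) : (qObs a0 a).IsHermitian := by
  rw [qObs_eq]
  ext i j
  fin_cases i <;> fin_cases j <;> simp [sub_eq_add_neg]

lemma trace_qObs (a0 : ℝ) (a : E3) : (qObs a0 a).trace = 2 * a0 := by
  rw [qObs_eq, trace_fin_two]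
  simp only [of_apply, cons_val', cons_val_zero, cons_val_fin_one, cons_val_one]
  ring

lemma blochVector_qObs (a0 : ℝ) (a : E3) : blochVector (qObs a0 a) = (2 : ℝ) • a := by
  ext i
  fin_cases i <;> simp [blochVector, qObs_eq, pauli1, pauli2, pauli3, trace_fin_two] <;> ring

lemma uncertainty_qObs (a0 : ℝ) (a : E3) {ρ : Matrix (Fin 2) (Fin 2) ℂ} (hρ : ρ.trace = 1) :
    uncertainty (qObs a0 a) ρ = √(‖a‖ ^ 2 - ⟪a, blochVector ρ⟫ ^ 2) := by
  have htr : ρ.trace.re = 1 := by simp [hρ]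
  rw [uncertainty, variance, mean, qObs_mul_self, re_trace_qObs_mul, re_trace_qObs_mul, htr,
    real_inner_smul_left]
  ring_nf

lemma one_sub_norm_blochVector_sq {ρ : Matrix (Fin 2) (Fin 2) ℂ} (hH : ρ.IsHermitian)
    (hρ : ρ.trace = 1) : 1 - ‖blochVector ρ‖ ^ 2 = 4 * ρ.det.re := by
  have h10 := hH.apply 1 0
  have h00 := congrArg Complex.im (hH.apply 0 0)
  have htr := congrArg Complex.re hρ
  simp [norm_sq_eq_fin3, blochVector, pauli1, pauli2, pauli3, trace_fin_two, det_fin_two,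
    vecMul, dotProduct, Fin.sum_univ_two, ← h10] at h00 htr ⊢
  linear_combination (-(1 + (ρ 0 0).re + (ρ 1 1).re)) * htr - 2 * (ρ 1 1).im * h00

lemma norm_blochVector_le_one {ρ : Matrix (Fin 2) (Fin 2) ℂ} (hρ : IsDensityMatrix ρ) :
    ‖blochVector ρ‖ ≤ 1 := by
  have hdet := (Complex.le_def.1 hρ.1.det_nonneg).1
  have := one_sub_norm_blochVector_sq hρ.1.1 hρ.2
  simp only [Complex.zero_re] at hdet
  nlinarith [norm_nonneg (blochVector ρ)]

def pureState (u : E3) : Matrix (Fin 2) (Fin 2) ℂ := qObs (1 / 2) ((1 / 2 : ℝ) • u)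

lemma pureState_mul_self {u : E3} (hu : ‖u‖ = 1) : pureState u * pureState u = pureState u := by
  rw [pureState, qObs_mul_self, norm_smul, hu, smul_smul]
  norm_num

lemma isDensityMatrix_pureState {u : E3} (hu : ‖u‖ = 1) : IsDensityMatrix (pureState u) := by
  refine ⟨?_, by rw [pureState, trace_qObs]; norm_num⟩
  have hpsd := posSemidef_conjTranspose_mul_self (pureState u)
  have hH : (pureState u)ᴴ = pureState u := qObs_isHermitian _ _
  rwa [hH, pureState_mul_self hu] at hpsd

lemma blochVector_pureState (u : E3) : blochVector (pureState u) = u := by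
  rw [pureState, blochVector_qObs, smul_smul]
  norm_num

theorem sum_deviations_two_observables_isLeast_general
    (a0 b0 : ℝ) (a b : E3) :
    IsLeast {v : ℝ | ∃ ρ : Matrix (Fin 2) (Fin 2) ℂ, IsDensityMatrix ρ ∧
        v = uncertainty (qObs a0 a) ρ + uncertainty (qObs b0 b) ρ}
      (‖cross3 a b‖ / max ‖a‖ ‖b‖) := by
  refine ⟨?_, ?_⟩
  · obtain ⟨u, hu, heq⟩ := exists_norm_eq_one_sqrt_add_sqrt_eq a b
    have hρ := isDensityMatrix_pureState hu
    refine ⟨pureState u, hρ, ?_⟩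
    rw [uncertainty_qObs _ _ hρ.2, uncertainty_qObs _ _ hρ.2, blochVector_pureState, heq]
  · rintro _ ⟨ρ, hρ, rfl⟩
    rw [uncertainty_qObs _ _ hρ.2, uncertainty_qObs _ _ hρ.2]
    refine div_le_of_le_mul₀ (by positivity) (by positivity) ?_
    rw [mul_comm]
    exact norm_cross3_le_max_mul (norm_blochVector_le_one hρ) a b

/-- the optimal state-independent lower bound for the sum of the standard
deviations of two qubit observables. -/
theorem sum_deviations_two_observables_isLeast
    (a0 b0 : ℝ) (a b : E3) (hab : LinearIndependent ℝ ![a, b]) :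
    IsLeast {v : ℝ | ∃ ρ : Matrix (Fin 2) (Fin 2) ℂ, IsDensityMatrix ρ ∧
        v = uncertainty (qObs a0 a) ρ + uncertainty (qObs b0 b) ρ}
      (‖cross3 a b‖ / max ‖a‖ ‖b‖) :=
  sum_deviations_two_observables_isLeast_general a0 b0 a b

end
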